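/- For L = 4 and α ∈ ℝ \ {1, −3}, the state φ = α(|0000⟩+|1111⟩) + (|1100⟩+|0011⟩) + (|1010⟩+|0101⟩) + (|1001⟩+|0110⟩) has all four one-qubit reduced density matrices maximally mixed. -/

import Mathlib

open Matrix BigOperators

/-- The (unnormalized) reduced one-qubit density matrix of the `l`-th qubit of
`φ ∈ (ℂ²)^⊗4`: the partial trace of `|φ⟩⟨φ|` over all qubits except the `l`-th. -/
noncomputable def reducedDensity (L : ℕ) (φ : (Fin L → Fin 2) → ℂ) (l : Fin L) :
    Matrix (Fin 2) (Fin 2) ℂ :=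
  fun i j => ∑ s : Fin L → Fin 2,
    if s l = i then φ s * star (φ (Function.update s l j)) else 0

/-- The four-qubit state
`φ = α(|0000⟩+|1111⟩) + (|1100⟩+|0011⟩) + (|1010⟩+|0101⟩) + (|1001⟩+|0110⟩)`. -/
noncomputable def phi4 (α : ℝ) : (Fin 4 → Fin 2) → ℂ :=
  fun s => (α : ℂ) * ((if s = ![0, 0, 0, 0] then 1 else 0)
      + (if s = ![1, 1, 1, 1] then 1 else 0))
    + (if s = ![1, 1, 0, 0] then 1 else 0) + (if s = ![0, 0, 1, 1] then 1 else 0)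
    + (if s = ![1, 0, 1, 0] then 1 else 0) + (if s = ![0, 1, 0, 1] then 1 else 0)
    + (if s = ![1, 0, 0, 1] then 1 else 0) + (if s = ![0, 1, 1, 0] then 1 else 0)


/-!
The state `phi4 α` is supported on bit strings of even weight. Flipping one qubit changes the
weight's parity, so every term `φ s * conj (φ s')` of an off-diagonal entry of a one-qubit
reduced density matrix vanishes. On the diagonal, the `i`-th entry collects `‖φ s‖²` over the
strings with `s l = i`: exactly one of `0000`, `1111` and three of the six weight-two strings,
giving `α² + 3`. Since the trace of a reduced density matrix is `‖φ‖² = 2 (α² + 3) > 0`,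
normalizing yields `1/2`.
-/

def parity {L : ℕ} (s : Fin L → Fin 2) : Fin 2 := ∑ k, s k

theorem parity_update_add {L : ℕ} (s : Fin L → Fin 2) (l : Fin L) (j : Fin 2) :
    parity (Function.update s l j) + s l = parity s + j := by
  simp only [parity, Finset.sum_update_of_mem (Finset.mem_univ l),
    Finset.sum_eq_sum_sdiff_singleton_add (Finset.mem_univ l) s]
  abel

theorem Fintype.sum_fin_succ_pi {n : ℕ} {β M : Type*} [Fintype β] [AddCommMonoid M]
    (g : (Fin (n + 1) → β) → M) : ∑ f, g f = ∑ a, ∑ f : Fin n → β, g (Matrix.vecCons a f) := by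
  rw [← (Fin.consEquiv fun _ => β).sum_comp, Fintype.sum_prod_type]
  rfl

section reducedDensity

variable {L : ℕ} (φ : (Fin L → Fin 2) → ℂ) (l : Fin L)

theorem reducedDensity_apply_self (i : Fin 2) :
    reducedDensity L φ l i i = ∑ s with s l = i, (‖φ s‖ : ℂ) ^ 2 := by
  rw [Finset.sum_filter]
  refine Finset.sum_congr rfl fun s _ => ?_
  split_ifs with h
  · rw [← h, Function.update_eq_self, Complex.star_def, Complex.mul_conj']
  · rfl

theorem trace_reducedDensity :
    trace (reducedDensity L φ l) = ∑ s, (‖φ s‖ : ℂ) ^ 2 := by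
  simp only [trace, diag, reducedDensity_apply_self]
  exact Finset.sum_fiberwise _ _ _

variable {φ}

theorem reducedDensity_apply_eq_zero_of_ne (hφ : ∀ s, parity s ≠ 0 → φ s = 0)
    {i j : Fin 2} (hij : i ≠ j) : reducedDensity L φ l i j = 0 := by
  refine Finset.sum_eq_zero fun s _ => ?_
  split_ifs with hs
  · have : parity s ≠ 0 ∨ parity (Function.update s l j) ≠ 0 := by
      by_contra! h
      have := parity_update_add s l j
      rw [h.1, h.2, hs, zero_add, zero_add] at this
      exact hij this
    rcases this with h | h
    · rw [hφ s h, zero_mul]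
    · rw [hφ _ h, star_zero, mul_zero]
  · rfl

theorem inv_sum_norm_sq_smul_reducedDensity {c : ℂ} (hc : c ≠ 0)
    (h : reducedDensity L φ l = c • 1) :
    (∑ s, (‖φ s‖ : ℂ) ^ 2)⁻¹ • reducedDensity L φ l = (1 / 2 : ℂ) • 1 := by
  rw [← trace_reducedDensity φ l, h, trace_smul, trace_one, smul_smul]
  congr 1
  simp only [Fintype.card_fin, Nat.cast_ofNat, smul_eq_mul]
  field_simp

end reducedDensity

theorem phi4_eq_zero_of_parity_ne_zero (α : ℝ) {s : Fin 4 → Fin 2} (hs : parity s ≠ 0) :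
    phi4 α s = 0 := by
  have hne : ∀ p : Fin 4 → Fin 2, parity p = 0 → s ≠ p := by rintro p hp rfl; exact hs hp
  simp (disch := decide) [phi4, hne]

theorem sum_filter_norm_sq_phi4 (α : ℝ) (l : Fin 4) (i : Fin 2) :
    ∑ s with s l = i, (‖phi4 α s‖ : ℂ) ^ 2 = (α : ℂ) ^ 2 + 3 := by
  have abs_sq : ((|α| : ℝ) : ℂ) ^ 2 = (α : ℂ) ^ 2 := by exact_mod_cast sq_abs α
  rw [Finset.sum_filter]
  fin_cases l <;> fin_cases i <;>
    simp [Fintype.sum_fin_succ_pi, phi4, Matrix.empty_eq, abs_sq] <;> ring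

theorem reducedDensity_phi4 (α : ℝ) (l : Fin 4) :
    reducedDensity 4 (phi4 α) l = ((α : ℂ) ^ 2 + 3) • 1 := by
  ext i j
  rcases eq_or_ne i j with rfl | hij
  · simp [reducedDensity_apply_self, sum_filter_norm_sq_phi4]
  · rw [reducedDensity_apply_eq_zero_of_ne l (fun _ => phi4_eq_zero_of_parity_ne_zero α) hij]
    simp [one_apply_ne hij]

theorem stmt15_general (α : ℝ) :
    ∀ l : Fin 4,
      ((∑ s : Fin 4 → Fin 2, (‖phi4 α s‖ : ℂ) ^ 2))⁻¹ • reducedDensity 4 (phi4 α) l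
        = (1/2 : ℂ) • (1 : Matrix (Fin 2) (Fin 2) ℂ) := by
  intro l
  refine inv_sum_norm_sq_smul_reducedDensity l ?_ (reducedDensity_phi4 α l)
  exact_mod_cast (by positivity : α ^ 2 + 3 ≠ 0)

/-- For `α ∈ ℝ \ {1, −3}` all four (normalized) reduced one-qubit density matrices of
`phi4 α` are maximally mixed. -/
theorem stmt15 (α : ℝ) (hα : α ≠ 1 ∧ α ≠ -3) :
    ∀ l : Fin 4,
      ((∑ s : Fin 4 → Fin 2, (‖phi4 α s‖ : ℂ) ^ 2))⁻¹ • reducedDensity 4 (phi4 α) l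
        = (1/2 : ℂ) • (1 : Matrix (Fin 2) (Fin 2) ℂ) :=
  stmt15_general α
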